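/- Let A ∈ M_d(K) be nilpotent with index of nilpotency n (A^n = 0 ≠ A^{n-1}) and v the number of distinct Jordan block sizes of A. Then the Jacobson radical of Cen(A) is nilpotent of index at most n·v, i.e., J(Cen(A))^{nv} = 0. -/

import Mathlib

/-!
Split `V` into the `T`-chains `x γ, T x γ, …, T ^ (k γ - 1) x γ`. An endomorphism `B` commuting
with `T` is determined by the vectors `B (x γ)`, and the coefficient of `x δ` in `B (x γ)`
vanishes when `k γ < k δ`. Hence, for every length `s`, these coefficients between chains of
length `s` form a surjective ring homomorphism from the centralizer onto a full matrix ring, which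
is semisimple: elements of the Jacobson radical have zero diagonal blocks. Giving `T ^ i (x γ)` the
weight `v * i + #{chain lengths > k γ}`, such an element strictly raises weights, and all weights
are `< n * v`, so a product of `n * v` radical elements vanishes.
-/

open Module Finset

theorem RingHom.map_eq_zero_of_mem_jacobson {R S : Type*} [Ring R] [Ring S] [IsSemisimpleRing S]
    {f : R →+* S} (hf : Function.Surjective f) {r : R} (hr : r ∈ Ring.jacobson R) : f r = 0 :=
  haveI : RingHomSurjective f := ⟨hf⟩
  IsSemisimpleModule.jacobson_le_ker R S R S f.toSemilinearMap hr

theorem Matrix.BlockTriangular.toSquareBlock_mul {m R : Type*} [Fintype m]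
    [NonUnitalNonAssocSemiring R] {M N : Matrix m m R} {b : m → ℕ} (hM : M.BlockTriangular b)
    (hN : N.BlockTriangular b) (s : ℕ) :
    (M * N).toSquareBlock b s = M.toSquareBlock b s * N.toSquareBlock b s := by
  ext i j
  simp only [toSquareBlock_def, of_apply, mul_apply]
  refine (Fintype.sum_of_injective Subtype.val Subtype.val_injective _ _ (fun l hl => ?_)
    fun _ => rfl).symm
  have hl : b l ≠ s := fun h => hl ⟨⟨l, h⟩, rfl⟩
  rcases hl.lt_or_gt with h | h
  · rw [hM (h.trans_eq i.2.symm), zero_mul]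
  · rw [hN (j.2.trans_lt h), mul_zero]

theorem Sigma.fin_ext_iff {ι : Type*} {k : ι → ℕ} {p q : (γ : ι) × Fin (k γ)} :
    p = q ↔ p.1 = q.1 ∧ (p.2 : ℕ) = q.2 := by
  obtain ⟨γ, i⟩ := p
  obtain ⟨δ, j⟩ := q
  constructor
  · rintro ⟨⟩; exact ⟨rfl, rfl⟩
  · rintro ⟨rfl, h⟩; exact congrArg _ (Fin.ext h)

theorem Finset.card_filter_lt_lt_card {α : Type*} [LinearOrder α] {S : Finset α} {s : α}
    (hs : s ∈ S) : #{t ∈ S | s < t} < #S :=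
  card_lt_card (filter_ssubset.mpr ⟨s, hs, lt_irrefl s⟩)

theorem Finset.card_filter_lt_lt_card_filter_lt {α : Type*} [LinearOrder α] {S : Finset α}
    {s s' : α} (h : s < s') (hs' : s' ∈ S) : #{t ∈ S | s' < t} < #{t ∈ S | s < t} := by
  refine card_lt_card ⟨monotone_filter_right _ fun _ _ => h.trans, fun hsub => ?_⟩
  exact lt_irrefl s' (mem_filter.mp (hsub (mem_filter.mpr ⟨hs', h⟩))).2

namespace Module.Basis

variable {ι R M : Type*} [Semiring R] [AddCommMonoid M] [Module R M] (b : Basis ι R M)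
  (μ : ι → ℕ)

def weightFiltration (j : ℕ) : Submodule R M :=
  Submodule.span R (b '' {i | j ≤ μ i})

theorem weightFiltration_zero : b.weightFiltration μ 0 = ⊤ := by
  simp [weightFiltration, b.span_eq]

theorem weightFiltration_eq_bot {j : ℕ} (h : ∀ i, μ i < j) : b.weightFiltration μ j = ⊥ := by
  simp [weightFiltration, fun i => (h i).not_ge]

theorem weightFiltration_antitone : Antitone (b.weightFiltration μ) :=
  fun _ _ h => Submodule.span_mono (Set.image_mono fun _ hi => h.trans hi)

theorem le_comap_weightFiltration_succ {f : Module.End R M}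
    (hf : ∀ i, f (b i) ∈ b.weightFiltration μ (μ i + 1)) (j : ℕ) :
    b.weightFiltration μ j ≤ (b.weightFiltration μ (j + 1)).comap f := by
  rw [weightFiltration, Submodule.span_le]
  rintro _ ⟨i, hi, rfl⟩
  exact b.weightFiltration_antitone μ (Nat.succ_le_succ hi) (hf i)

theorem le_comap_weightFiltration_list_prod (l : List (Module.End R M))
    (hl : ∀ f ∈ l, ∀ i, f (b i) ∈ b.weightFiltration μ (μ i + 1)) (j : ℕ) :
    b.weightFiltration μ j ≤ (b.weightFiltration μ (j + l.length)).comap l.prod := by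
  induction l generalizing j with
  | nil => exact fun w hw => hw
  | cons f l ih =>
    intro w hw
    rw [List.prod_cons, List.length_cons, ← add_assoc]
    exact b.le_comap_weightFiltration_succ μ (hl f List.mem_cons_self) _
      (ih (fun g hg => hl g (List.mem_cons_of_mem f hg)) j hw)

theorem list_prod_eq_zero_of_forall_apply_mem_weightFiltration (l : List (Module.End R M))
    (hl : ∀ f ∈ l, ∀ i, f (b i) ∈ b.weightFiltration μ (μ i + 1)) (hμ : ∀ i, μ i < l.length) :
    l.prod = 0 := by
  ext w
  have := b.le_comap_weightFiltration_list_prod μ l hl 0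
    (b.weightFiltration_zero μ ▸ Submodule.mem_top (x := w))
  rwa [zero_add, b.weightFiltration_eq_bot μ hμ, Submodule.mem_comap, Submodule.mem_bot] at this

end Module.Basis

def jordanWeight {ι : Type*} [Fintype ι] (k : ι → ℕ) (p : (γ : ι) × Fin (k γ)) : ℕ :=
  #(univ.image k) * p.2 + #{t ∈ univ.image k | k p.1 < t}

theorem jordanWeight_lt {ι : Type*} [Fintype ι] {k : ι → ℕ} {n : ℕ} (hkn : ∀ γ, k γ ≤ n)
    (p : (γ : ι) × Fin (k γ)) : jordanWeight k p < n * #(univ.image k) := by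
  have := card_filter_lt_lt_card (mem_image_of_mem k (mem_univ p.1))
  have : #(univ.image k) * (p.2 + 1) ≤ #(univ.image k) * n :=
    Nat.mul_le_mul_left _ (p.2.isLt.trans_le (hkn p.1))
  rw [jordanWeight]
  nlinarith

theorem jordanWeight_lt_jordanWeight {ι : Type*} [Fintype ι] {k : ι → ℕ}
    {p r : (γ : ι) × Fin (k γ)} {j : ℕ} (hj : (r.2 : ℕ) = p.2 + j) (hk : k r.1 ≤ j + k p.1)
    (hdiag : j = 0 → k r.1 ≠ k p.1) : jordanWeight k p < jordanWeight k r := by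
  rw [jordanWeight, jordanWeight, hj, mul_add]
  rcases Nat.eq_zero_or_pos j with rfl | hj0
  · have := card_filter_lt_lt_card_filter_lt (S := univ.image k)
      ((hk.trans_eq (zero_add _)).lt_of_ne (hdiag rfl)) (mem_image_of_mem k (mem_univ p.1))
    omega
  · have := card_filter_lt_lt_card (mem_image_of_mem k (mem_univ p.1))
    have : #(univ.image k) ≤ #(univ.image k) * j := Nat.le_mul_of_pos_right _ hj0
    omega

structure IsJordanBasis {K V ι : Type*} [Field K] [AddCommGroup V] [Module K V] {k : ι → ℕ}
    (T : Module.End K V) (x : ι → V) (b : Basis ((γ : ι) × Fin (k γ)) K V) : Prop where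
  pow_apply_eq_zero : ∀ γ, (T ^ k γ) (x γ) = 0
  basis_eq : ∀ p, b p = (T ^ (p.2 : ℕ)) (x p.1)

noncomputable def headCoeff {K V ι : Type*} [Field K] [AddCommGroup V] [Module K V] {k : ι → ℕ}
    (b : Basis ((γ : ι) × Fin (k γ)) K V) (x : ι → V) (hk : ∀ γ, 0 < k γ)
    (B : Module.End K V) : Matrix ι ι K :=
  Matrix.of fun δ γ => b.repr (B (x γ)) ⟨δ, ⟨0, hk δ⟩⟩

namespace IsJordanBasis

variable {K V ι : Type*} [Field K] [AddCommGroup V] [Module K V] {k : ι → ℕ}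
  {T : Module.End K V} {x : ι → V} {b : Basis ((γ : ι) × Fin (k γ)) K V}

theorem pow_apply_eq_zero_of_le (hJ : IsJordanBasis T x b) {γ : ι} {t : ℕ} (h : k γ ≤ t) :
    (T ^ t) (x γ) = 0 := by
  rw [← Nat.sub_add_cancel h, pow_add, Module.End.mul_apply, hJ.pow_apply_eq_zero, map_zero]

theorem pow_apply_basis (hJ : IsJordanBasis T x b) (t : ℕ) (p : (γ : ι) × Fin (k γ)) :
    (T ^ t) (b p) = (T ^ (t + p.2)) (x p.1) := by
  rw [hJ.basis_eq, pow_add, Module.End.mul_apply]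

theorem le_of_pow_eq_zero (hJ : IsJordanBasis T x b) {n : ℕ} (hn : T ^ n = 0) (γ : ι) :
    k γ ≤ n := by
  by_contra! h
  apply b.ne_zero ⟨γ, ⟨n, h⟩⟩
  rw [hJ.basis_eq, hn, LinearMap.zero_apply]

theorem repr_pow_apply [DecidableEq ι] (hJ : IsJordanBasis T x b) (γ : ι) (t : ℕ)
    (r : (γ : ι) × Fin (k γ)) :
    b.repr ((T ^ t) (x γ)) r = if r.1 = γ ∧ (r.2 : ℕ) = t then 1 else 0 := by
  by_cases ht : t < k γ
  · rw [← show b ⟨γ, ⟨t, ht⟩⟩ = (T ^ t) (x γ) from hJ.basis_eq _, b.repr_self,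
      Finsupp.single_apply]
    refine if_congr (Sigma.fin_ext_iff.trans ?_) rfl rfl
    exact ⟨fun ⟨h1, h2⟩ => ⟨h1.symm, h2.symm⟩, fun ⟨h1, h2⟩ => ⟨h1.symm, h2.symm⟩⟩
  · rw [hJ.pow_apply_eq_zero_of_le (not_lt.mp ht), map_zero, Finsupp.zero_apply, if_neg]
    rintro ⟨rfl, rfl⟩
    exact ht r.2.isLt

theorem repr_apply [DecidableEq ι] (hJ : IsJordanBasis T x b) (γ : ι)
    (r : (γ : ι) × Fin (k γ)) :
    b.repr (x γ) r = if r.1 = γ ∧ (r.2 : ℕ) = 0 then 1 else 0 := by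
  simpa using hJ.repr_pow_apply γ 0 r

/-- `T` shifts coordinates one step along each chain. -/
theorem repr_pow_apply_mk [Fintype ι] [DecidableEq ι] (hJ : IsJordanBasis T x b) (t : ℕ)
    (w : V) (δ : ι) (j : Fin (k δ)) :
    b.repr ((T ^ t) w) ⟨δ, j⟩ = if h : t ≤ j then b.repr w ⟨δ, ⟨j - t, by omega⟩⟩ else 0 := by
  conv_lhs => rw [← b.sum_repr w]
  simp only [map_sum, map_smul, hJ.pow_apply_basis, Finsupp.coe_finsetSum, Finset.sum_apply,
    Finsupp.coe_smul, Pi.smul_apply, hJ.repr_pow_apply, smul_eq_mul, mul_ite, mul_one, mul_zero]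
  split_ifs with h
  · rw [Fintype.sum_eq_single ⟨δ, ⟨j - t, by omega⟩⟩]
    · exact if_pos ⟨rfl, by simp only; omega⟩
    · rintro q hq
      refine if_neg fun ⟨hδ, hj⟩ => hq (Sigma.fin_ext_iff.mpr ⟨hδ.symm, ?_⟩)
      simp only
      omega
  · refine Fintype.sum_eq_zero _ fun q => if_neg ?_
    rintro ⟨-, hj⟩
    omega

theorem apply_basis (hJ : IsJordanBasis T x b) {B : Module.End K V} (hB : Commute T B)
    (p : (γ : ι) × Fin (k γ)) : B (b p) = (T ^ (p.2 : ℕ)) (B (x p.1)) := by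
  rw [hJ.basis_eq, ← Module.End.mul_apply, ← Module.End.mul_apply, (hB.pow_left _).eq]

/-- `T ^ k γ` kills `B (x γ)` and moves the coordinate `⟨δ, j⟩` to `⟨δ, j + k γ⟩`, which exists. -/
theorem repr_apply_eq_zero_of_lt [Fintype ι] [DecidableEq ι] (hJ : IsJordanBasis T x b)
    {B : Module.End K V} (hB : Commute T B) {γ δ : ι} {j : Fin (k δ)} (h : (j : ℕ) + k γ < k δ) :
    b.repr (B (x γ)) ⟨δ, j⟩ = 0 := by
  have := hJ.repr_pow_apply_mk (k γ) (B (x γ)) δ ⟨j + k γ, h⟩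
  rw [dif_pos (Nat.le_add_left _ _), ← Module.End.mul_apply, (hB.pow_left _).eq,
    Module.End.mul_apply, hJ.pow_apply_eq_zero, map_zero, map_zero, Finsupp.zero_apply] at this
  simpa using this.symm

theorem headCoeff_one [DecidableEq ι] (hJ : IsJordanBasis T x b) (hk : ∀ γ, 0 < k γ) :
    headCoeff b x hk 1 = 1 := by
  ext δ γ
  simp [headCoeff, hJ.repr_apply, Matrix.one_apply]

theorem blockTriangular_headCoeff [Fintype ι] [DecidableEq ι] (hJ : IsJordanBasis T x b)
    (hk : ∀ γ, 0 < k γ) {B : Module.End K V} (hB : Commute T B) :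
    (headCoeff b x hk B).BlockTriangular k :=
  fun _ _ h => hJ.repr_apply_eq_zero_of_lt hB (by simpa using h)

theorem headCoeff_mul [Fintype ι] [DecidableEq ι] (hJ : IsJordanBasis T x b) (hk : ∀ γ, 0 < k γ)
    {B : Module.End K V} (hB : Commute T B) (C : Module.End K V) :
    headCoeff b x hk (B * C) = headCoeff b x hk B * headCoeff b x hk C := by
  ext δ γ
  simp only [headCoeff, Matrix.of_apply, Matrix.mul_apply, Module.End.mul_apply]
  conv_lhs => rw [← b.sum_repr (C (x γ))]
  simp only [map_sum, map_smul, Finsupp.coe_finsetSum, Finset.sum_apply, Finsupp.coe_smul,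
    Pi.smul_apply, smul_eq_mul]
  refine (Fintype.sum_of_injective (fun α => ⟨α, ⟨0, hk α⟩⟩) (fun _ _ h => congrArg Sigma.fst h)
    _ _ (fun q hq => ?_) fun α => ?_).symm
  · have hq : (q.2 : ℕ) ≠ 0 := fun h0 => hq ⟨q.1, Sigma.fin_ext_iff.mpr ⟨rfl, h0.symm⟩⟩
    rw [hJ.apply_basis hB, hJ.repr_pow_apply_mk, dif_neg (by simpa using hq), mul_zero]
  · rw [hJ.apply_basis hB, pow_zero, Module.End.one_apply, mul_comm]

theorem commute_of_mem_centralizer {B : Module.End K V} (hB : B ∈ Subalgebra.centralizer K {T}) :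
    Commute T B :=
  (Subalgebra.mem_centralizer_iff K).mp hB T rfl

/-- Multiplicative because `headCoeff` is block triangular on the centralizer. -/
noncomputable def blockHom [Fintype ι] [DecidableEq ι] (hJ : IsJordanBasis T x b)
    (hk : ∀ γ, 0 < k γ) (s : ℕ) :
    Subalgebra.centralizer K {T} →+* Matrix {γ // k γ = s} {γ // k γ = s} K where
  toFun B := (headCoeff b x hk B).toSquareBlock k s
  map_one' := by
    rw [Subalgebra.coe_one, hJ.headCoeff_one]
    exact Matrix.toBlock_one_self _
  map_mul' B C := by
    have hB := commute_of_mem_centralizer B.2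
    rw [Subalgebra.coe_mul, hJ.headCoeff_mul hk hB, Matrix.BlockTriangular.toSquareBlock_mul
      (hJ.blockTriangular_headCoeff hk hB)
      (hJ.blockTriangular_headCoeff hk (commute_of_mem_centralizer C.2))]
  map_zero' := by ext; simp [headCoeff, Matrix.toSquareBlock_def]
  map_add' B C := by ext; simp [headCoeff, Matrix.toSquareBlock_def]

theorem blockHom_surjective [Fintype ι] [DecidableEq ι] (hJ : IsJordanBasis T x b)
    (hk : ∀ γ, 0 < k γ) (s : ℕ) : Function.Surjective (hJ.blockHom hk s) := by
  intro M
  let c (γ : ι) (δ : {γ // k γ = s}) : K := if h : k γ = s then M δ ⟨γ, h⟩ else 0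
  let L : Module.End K V := b.constr K fun p => ∑ δ, c p.1 δ • (T ^ (p.2 : ℕ)) (x δ)
  have hL (γ : ι) (t : ℕ) : L ((T ^ t) (x γ)) = ∑ δ, c γ δ • (T ^ t) (x δ) := by
    by_cases ht : t < k γ
    · rw [← show b ⟨γ, ⟨t, ht⟩⟩ = (T ^ t) (x γ) from hJ.basis_eq _, b.constr_basis]
    · rw [hJ.pow_apply_eq_zero_of_le (not_lt.mp ht), map_zero]
      refine (Fintype.sum_eq_zero _ fun δ => ?_).symm
      by_cases h : k γ = s
      · rw [hJ.pow_apply_eq_zero_of_le (by omega), smul_zero]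
      · simp [c, h]
  have hLT : Commute T L := by
    refine b.ext fun p => ?_
    simp only [Module.End.mul_apply]
    rw [hJ.basis_eq, hL, ← Module.End.mul_apply T, ← pow_succ', hL, map_sum]
    simp only [map_smul, ← Module.End.mul_apply T, ← pow_succ']
  refine ⟨⟨L, (Subalgebra.mem_centralizer_iff K).mpr (by rintro _ rfl; exact hLT.eq)⟩, ?_⟩
  ext δ γ
  have hx := hL γ 0
  simp only [pow_zero, Module.End.one_apply] at hx
  show b.repr (L (x γ)) ⟨δ, ⟨0, hk δ⟩⟩ = M δ γ
  rw [hx]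
  simp only [map_sum, map_smul, Finsupp.coe_finsetSum, Finset.sum_apply, Finsupp.coe_smul,
    Pi.smul_apply, smul_eq_mul, hJ.repr_apply]
  rw [Fintype.sum_eq_single δ fun δ' h => by
    simp [(Subtype.val_injective.ne h).symm]]
  simp [c, γ.2]

theorem apply_basis_mem_weightFiltration [Fintype ι] [DecidableEq ι] (hJ : IsJordanBasis T x b)
    (hk : ∀ γ, 0 < k γ) {B : Module.End K V} (hB : Commute T B)
    (hdiag : ∀ δ γ, k δ = k γ → headCoeff b x hk B δ γ = 0) (p : (γ : ι) × Fin (k γ)) :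
    B (b p) ∈ b.weightFiltration (jordanWeight k) (jordanWeight k p + 1) := by
  rw [Basis.weightFiltration, b.mem_span_image]
  rintro ⟨δ, j⟩ hr
  rw [SetLike.mem_coe, Finsupp.mem_support_iff, hJ.apply_basis hB, hJ.repr_pow_apply_mk] at hr
  split_ifs at hr with hle
  · refine jordanWeight_lt_jordanWeight (j := j - p.2) (by simp only; omega) ?_ fun h0 hδ => ?_
    · by_contra! hlt
      exact hr (hJ.repr_apply_eq_zero_of_lt hB (j := ⟨j - p.2, _⟩) hlt)
    · refine hr (Eq.trans ?_ (hdiag δ p.1 hδ))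
      exact congrArg (b.repr (B (x p.1))) (Sigma.fin_ext_iff.mpr ⟨rfl, h0⟩)
  · exact absurd rfl hr

theorem list_prod_eq_zero_of_mem_jacobson [Fintype ι] [DecidableEq ι] (hJ : IsJordanBasis T x b)
    (hk : ∀ γ, 0 < k γ) {n : ℕ} (hkn : ∀ γ, k γ ≤ n) (l : List (Subalgebra.centralizer K {T}))
    (hl : ∀ B ∈ l, B ∈ Ring.jacobson (Subalgebra.centralizer K {T}))
    (hlen : n * #(univ.image k) ≤ l.length) : l.prod = 0 := by
  have hdiag (B) (hB : B ∈ l) (δ γ : ι) (h : k δ = k γ) : headCoeff b x hk B δ γ = 0 :=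
    congrFun₂ (RingHom.map_eq_zero_of_mem_jacobson (hJ.blockHom_surjective hk (k γ)) (hl B hB))
      ⟨δ, h⟩ ⟨γ, rfl⟩
  refine Subtype.ext ((map_list_prod (Subalgebra.centralizer K {T}).val l).trans ?_)
  refine b.list_prod_eq_zero_of_forall_apply_mem_weightFiltration (jordanWeight k) _ ?_ fun p => ?_
  · simp only [List.mem_map]
    rintro _ ⟨B, hB, rfl⟩
    exact hJ.apply_basis_mem_weightFiltration hk (commute_of_mem_centralizer B.2) (hdiag B hB)
  · rw [List.length_map]
    exact (jordanWeight_lt hkn p).trans_le hlen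

end IsJordanBasis

theorem Subalgebra.map_centralizer_singleton {R A B : Type*} [CommSemiring R] [Semiring A]
    [Semiring B] [Algebra R A] [Algebra R B] (e : A ≃ₐ[R] B) (a : A) :
    (centralizer R {a}).map (e : A →ₐ[R] B) = centralizer R {e a} := by
  ext f
  simp only [mem_map, mem_centralizer_iff, Set.mem_singleton_iff, forall_eq,
    AlgEquiv.coe_toAlgHom]
  constructor
  · rintro ⟨g, hg, rfl⟩
    rw [← map_mul, hg, map_mul]
  · intro hf
    exact ⟨e.symm f, e.injective (by simpa using hf), by simp⟩

theorem stmt17_general {K : Type*} [Field K] {d : ℕ} (A : Matrix (Fin d) (Fin d) K)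
    {n : ℕ} (hn : A ^ n = 0) {m : ℕ}
    (k : Fin m → ℕ) (hk1 : ∀ γ, 1 ≤ k γ) (x : Fin m → (Fin d → K))
    (hzero : ∀ γ, ((Matrix.toLin' A) ^ (k γ)) (x γ) = 0)
    (b : Module.Basis ((γ : Fin m) × Fin (k γ)) K (Fin d → K))
    (hb : ∀ p : (γ : Fin m) × Fin (k γ), b p = ((Matrix.toLin' A) ^ ((p.2 : ℕ))) (x p.1))
    (v : ℕ) (hv : v = (Finset.univ.image k).card) :
    ∀ y : Fin (n * v) → Subalgebra.centralizer K ({A} : Set (Matrix (Fin d) (Fin d) K)),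
      (∀ i, y i ∈ Ideal.jacobson
        (⊥ : Ideal (Subalgebra.centralizer K ({A} : Set (Matrix (Fin d) (Fin d) K))))) →
      (List.ofFn y).prod = 0 := by
  intro y hy
  let e := Matrix.toLinAlgEquiv' (R := K) (n := Fin d)
  let ψ := (e.subalgebraMap _).trans
    (Subalgebra.equivOfEq _ _ (Subalgebra.map_centralizer_singleton e A))
  have hJ : IsJordanBasis (e A) x b := ⟨hzero, hb⟩
  have hkn := hJ.le_of_pow_eq_zero (n := n) (by rw [← map_pow, hn, map_zero])
  apply ψ.injective
  rw [map_list_prod, map_zero, List.map_ofFn]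
  refine hJ.list_prod_eq_zero_of_mem_jacobson hk1 hkn _ (fun B hB => ?_) (by simp [hv])
  obtain ⟨i, rfl⟩ := List.mem_ofFn.mp hB
  have hyi := hy i
  rw [Ideal.jacobson_bot] at hyi
  exact Ring.le_comap_jacobson (R := Subalgebra.centralizer K {A})
    (R₂ := Subalgebra.centralizer K {e A}) (ψ.toRingEquiv : _ →+* _) hyi

theorem stmt17 {K : Type*} [Field K] {d : ℕ} (A : Matrix (Fin d) (Fin d) K)
    {n : ℕ} (hn : A ^ n = 0) (hn' : A ^ (n - 1) ≠ 0) {m : ℕ}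
    (k : Fin m → ℕ) (hk1 : ∀ γ, 1 ≤ k γ) (x : Fin m → (Fin d → K))
    (hzero : ∀ γ, ((Matrix.toLin' A) ^ (k γ)) (x γ) = 0)
    (b : Module.Basis ((γ : Fin m) × Fin (k γ)) K (Fin d → K))
    (hb : ∀ p : (γ : Fin m) × Fin (k γ), b p = ((Matrix.toLin' A) ^ ((p.2 : ℕ))) (x p.1))
    (v : ℕ) (hv : v = (Finset.univ.image k).card) :
    ∀ y : Fin (n * v) → Subalgebra.centralizer K ({A} : Set (Matrix (Fin d) (Fin d) K)),
      (∀ i, y i ∈ Ideal.jacobson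
        (⊥ : Ideal (Subalgebra.centralizer K ({A} : Set (Matrix (Fin d) (Fin d) K))))) →
      (List.ofFn y).prod = 0 :=
  stmt17_general A hn k hk1 x hzero b hb v hv
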